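/- arXiv:1511.06251 — 4 statements merged into one kernel-verified Lean document; each statement's English description precedes it below -/
import Mathlib

section
/- Let a, η > 0 with (1-μ)² ≥ 4aη. Then the characteristic polynomial of the matrix A(μ) with rows (0, 0, a/η), (0, -2(1-μ)/η, -2), (-2, 1/η, -(1-μ)/η) has all roots with negative real part whenever 0 ≤ μ < 1. -/
/-!
The characteristic polynomial of `A(μ)` is the real cubic
`z³ + b₂ z² + b₁ z + b₀` with `b₂ = 3(1-μ)/η`, `b₁ = 2(1-μ)²/η² + 2(1+a)/η`, `b₀ = 4a(1-μ)/η²`.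
For `μ < 1` these coefficients satisfy the Routh–Hurwitz conditions `b₂, b₀ > 0`, `b₂ b₁ > b₀`,
which force every root into the open left half-plane: a root `x + iy` with `y ≠ 0` satisfies
`b₂ b₁ - b₀ = -2x((b₂ + x)² + y²)`, and a real root `x ≥ 0` is excluded by positivity.
-/

open Matrix Polynomial

theorem Complex.re_neg_of_cubic_eq_zero {b₂ b₁ b₀ : ℝ} (hb₂ : 0 < b₂) (hb₀ : 0 < b₀)
    (hHurwitz : b₀ < b₂ * b₁) {z : ℂ} (hz : z ^ 3 + b₂ * z ^ 2 + b₁ * z + b₀ = 0) :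
    z.re < 0 := by
  obtain ⟨x, y⟩ := z
  have hre : x ^ 3 - 3 * x * y ^ 2 + b₂ * (x ^ 2 - y ^ 2) + b₁ * x + b₀ = 0 := by
    have := congrArg Complex.re hz
    simp only [pow_succ, pow_zero, one_mul, Complex.add_re, Complex.mul_re, Complex.mul_im,
      Complex.ofReal_re, Complex.ofReal_im, Complex.zero_re] at this
    linear_combination this
  have him : y * (3 * x ^ 2 - y ^ 2 + 2 * b₂ * x + b₁) = 0 := by
    have := congrArg Complex.im hz
    simp only [pow_succ, pow_zero, one_mul, Complex.add_im, Complex.mul_re, Complex.mul_im,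
      Complex.ofReal_re, Complex.ofReal_im, Complex.zero_im] at this
    linear_combination this
  by_contra! hx
  have hb₁ : 0 < b₁ := pos_of_mul_pos_right (hb₀.trans hHurwitz) hb₂.le
  rcases mul_eq_zero.mp him with rfl | him
  · nlinarith [pow_nonneg hx 3, mul_nonneg hb₂.le (sq_nonneg x), mul_nonneg hb₁.le hx]
  · have hgap : b₂ * b₁ - b₀ = -2 * x * ((b₂ + x) ^ 2 + y ^ 2) := by
      linear_combination (-1) * hre + (x + b₂) * him
    nlinarith [mul_nonneg hx (add_nonneg (sq_nonneg (b₂ + x)) (sq_nonneg y))]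

theorem charpoly_momentumMatrix (a η μ : ℝ) :
    (!![0, 0, a / η; 0, -2 * (1 - μ) / η, -2; -2, 1 / η, -(1 - μ) / η]).charpoly =
      X ^ 3 + C (3 * (1 - μ) / η) * X ^ 2 + C (2 * (1 - μ) ^ 2 / η ^ 2 + 2 * (1 + a) / η) * X
        + C (4 * a * (1 - μ) / η ^ 2) := by
  rw [Matrix.charpoly, Matrix.det_fin_three]
  simp only [div_eq_mul_inv, ← inv_pow]
  simp only [neg_mul, one_mul, neg_sub, Fin.isValue, charmatrix_apply_eq, of_apply, cons_val',
    cons_val_zero, cons_val_fin_one, map_zero, sub_zero, cons_val_one, map_neg, map_mul, C_ofNat,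
    map_sub, map_one, sub_neg_eq_add, cons_val, ne_eq, Fin.reduceEq, not_false_eq_true,
    charmatrix_apply_ne, neg_neg, mul_neg, zero_ne_one, neg_zero, one_ne_zero, mul_zero, zero_mul,
    add_zero, map_add, map_pow]
  ring

theorem stmt_10_general (a η μ : ℝ) (ha : 0 < a) (hη : 0 < η)
    (hμ1 : μ < 1)
    (A : Matrix (Fin 3) (Fin 3) ℝ)
    (hA : A = !![0, 0, a / η; 0, -2 * (1 - μ) / η, -2; -2, 1 / η, -(1 - μ) / η]) :
    ∀ z : ℂ, ((A.map (Complex.ofReal)).charpoly).IsRoot z → z.re < 0 := by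
  intro z hz
  rw [show A.map Complex.ofReal = A.map Complex.ofRealHom from rfl, charpoly_map, hA,
    charpoly_momentumMatrix] at hz
  have hroot : z ^ 3 + ((3 * (1 - μ) / η : ℝ) : ℂ) * z ^ 2
      + ((2 * (1 - μ) ^ 2 / η ^ 2 + 2 * (1 + a) / η : ℝ) : ℂ) * z
      + ((4 * a * (1 - μ) / η ^ 2 : ℝ) : ℂ) = 0 := by
    simpa using hz
  have hc : 0 < 1 - μ := sub_pos.mpr hμ1
  refine Complex.re_neg_of_cubic_eq_zero (by positivity) (by positivity) ?_ hroot
  field_simp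
  nlinarith [pow_pos hc 3, mul_pos ha hc, mul_pos hc hη]

/-- Stability of the momentum-SGD moment dynamics: for 0 ≤ μ < 1 (and (1-μ)² ≥ 4aη),
every root of the characteristic polynomial of A(μ) has negative real part. -/
theorem stmt_10 (a η μ : ℝ) (ha : 0 < a) (hη : 0 < η)
    (hdisc : 4 * a * η ≤ (1 - μ) ^ 2) (hμ0 : 0 ≤ μ) (hμ1 : μ < 1)
    (A : Matrix (Fin 3) (Fin 3) ℝ)
    (hA : A = !![0, 0, a / η; 0, -2 * (1 - μ) / η, -2; -2, 1 / η, -(1 - μ) / η]) :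
    ∀ z : ℂ, ((A.map (Complex.ofReal)).charpoly).IsRoot z → z.re < 0 :=
  stmt_10_general a η μ ha hη hμ1 A hA
end

section
/- Asymptotically as μ → 1⁻ with aη fixed and small, for μ ≤ μ_opt = 1 - 2√(aη), the eigenvalue λ(μ) = -((1-μ) - √((1-μ)²-4aη))/η satisfies λ(μ) = -2a/(1-μ) + O(a²η/(1-μ)³). In particular λ(μ) ≤ λ(0) for all μ ∈ [0, μ_opt], i.e. any nonzero momentum improves the descent rate. -/
/-!
Rationalizing, `λ(μ) = -4a / (s + √(s² - 4aη))` with `s = 1 - μ`, which is legitimate as long as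
the discriminant is nonnegative, i.e. `μ ≤ μ_opt`. Comparing with `-2a / s = -4a / (2s)` leaves
the error `-8a²η / (s (s + √(s² - 4aη))²)`, of size at most `8a²η / s³`, and since the
denominator `s + √(s² - 4aη)` increases with `s`, `λ` is largest at `s = 1`, i.e. at `μ = 0`.
-/

namespace MomentumRate

variable {a η s c : ℝ}

theorem pos_and_four_mul_le_sq_of_two_sqrt_le {x : ℝ} (hx : 0 < x) (h : 2 * √x ≤ s) :
    0 < s ∧ 4 * x ≤ s ^ 2 := by
  have hsqrt : 0 < √x := Real.sqrt_pos.mpr hx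
  have hsq : √x ^ 2 = x := Real.sq_sqrt hx.le
  constructor <;> nlinarith

theorem sub_sqrt_sq_sub_eq_div (hs : 0 < s) (hc : c ≤ s ^ 2) :
    s - √(s ^ 2 - c) = c / (s + √(s ^ 2 - c)) := by
  have hD := Real.sq_sqrt (sub_nonneg.mpr hc)
  rw [eq_div_iff (by positivity)]
  linear_combination -hD

theorem inv_add_sqrt_sq_sub_sub_inv (hs : 0 < s) (hc : c ≤ s ^ 2) :
    (s + √(s ^ 2 - c))⁻¹ - (2 * s)⁻¹ = c / (2 * s * (s + √(s ^ 2 - c)) ^ 2) := by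
  have hrat := sub_sqrt_sq_sub_eq_div hs hc
  rw [eq_div_iff (by positivity)] at hrat
  field_simp
  linear_combination hrat

theorem abs_inv_add_sqrt_sq_sub_sub_inv_le (hs : 0 < s) (hc₀ : 0 ≤ c) (hc : c ≤ s ^ 2) :
    |(s + √(s ^ 2 - c))⁻¹ - (2 * s)⁻¹| ≤ c / (2 * s ^ 3) := by
  rw [inv_add_sqrt_sq_sub_sub_inv hs hc, abs_of_nonneg (by positivity)]
  have : s ≤ s + √(s ^ 2 - c) := le_add_of_nonneg_right (Real.sqrt_nonneg _)
  calc c / (2 * s * (s + √(s ^ 2 - c)) ^ 2) ≤ c / (2 * s * s ^ 2) := by gcongr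
    _ = c / (2 * s ^ 3) := by ring

theorem neg_sub_sqrt_div_eq (hη : η ≠ 0) (hs : 0 < s) (h : 4 * a * η ≤ s ^ 2) :
    -(s - √(s ^ 2 - 4 * a * η)) / η = -(4 * a) * (s + √(s ^ 2 - 4 * a * η))⁻¹ := by
  rw [sub_sqrt_sq_sub_eq_div hs h]
  field_simp

theorem abs_neg_mul_inv_add_sqrt_sub_div_le (ha : 0 ≤ a) (hη : 0 ≤ η) (hs : 0 < s)
    (h : 4 * a * η ≤ s ^ 2) :
    |-(4 * a) * (s + √(s ^ 2 - 4 * a * η))⁻¹ - (-(2 * a) / s)| ≤ 8 * (a ^ 2 * η / s ^ 3) := by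
  have herr : -(4 * a) * (s + √(s ^ 2 - 4 * a * η))⁻¹ - (-(2 * a) / s) =
      -(4 * a) * ((s + √(s ^ 2 - 4 * a * η))⁻¹ - (2 * s)⁻¹) := by
    rw [mul_inv]; ring
  calc |-(4 * a) * (s + √(s ^ 2 - 4 * a * η))⁻¹ - (-(2 * a) / s)|
      = 4 * a * |(s + √(s ^ 2 - 4 * a * η))⁻¹ - (2 * s)⁻¹| := by
        rw [herr, abs_mul, abs_neg, abs_of_nonneg (by positivity)]
    _ ≤ 4 * a * (4 * a * η / (2 * s ^ 3)) := by
        gcongr; exact abs_inv_add_sqrt_sq_sub_sub_inv_le hs (by positivity) h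
    _ = 8 * (a ^ 2 * η / s ^ 3) := by field_simp; ring

end MomentumRate

open MomentumRate in
theorem stmt_11_general (a η : ℝ) (ha : 0 < a) (hη : 0 < η)
    (lam : ℝ → ℝ)
    (hlam : ∀ μ : ℝ, lam μ =
      -((1 - μ) - Real.sqrt ((1 - μ) ^ 2 - 4 * a * η)) / η)
    (μopt : ℝ) (hμopt : μopt = 1 - 2 * Real.sqrt (a * η)) :
    (∃ C > (0 : ℝ), ∀ μ ∈ Set.Icc (0 : ℝ) μopt,
      |lam μ - (-(2 * a) / (1 - μ))| ≤ C * (a ^ 2 * η / (1 - μ) ^ 3)) ∧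
    (∀ μ ∈ Set.Icc (0 : ℝ) μopt, lam μ ≤ lam 0) := by
  have hwindow : ∀ μ ∈ Set.Icc (0 : ℝ) μopt, 0 < 1 - μ ∧ 4 * a * η ≤ (1 - μ) ^ 2 := by
    rintro μ ⟨-, hμ⟩
    rw [mul_assoc]
    exact pos_and_four_mul_le_sq_of_two_sqrt_le (by positivity) (by linarith)
  have hlam' : ∀ μ ∈ Set.Icc (0 : ℝ) μopt,
      lam μ = -(4 * a) * ((1 - μ) + √((1 - μ) ^ 2 - 4 * a * η))⁻¹ := fun μ hμ =>
    (hlam μ).trans (neg_sub_sqrt_div_eq hη.ne' (hwindow μ hμ).1 (hwindow μ hμ).2)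
  refine ⟨⟨8, by norm_num, fun μ hμ => ?_⟩, fun μ hμ => ?_⟩
  · rw [hlam' μ hμ]
    exact abs_neg_mul_inv_add_sqrt_sub_div_le ha.le hη.le (hwindow μ hμ).1 (hwindow μ hμ).2
  · have h0 : (0 : ℝ) ∈ Set.Icc 0 μopt := ⟨le_rfl, hμ.1.trans hμ.2⟩
    have hs := (hwindow μ hμ).1
    rw [hlam' μ hμ, hlam' 0 h0, neg_mul, neg_mul, neg_le_neg_iff]
    gcongr <;> exact hμ.1

/-- Asymptotics of the dominant eigenvalue: for μ ≤ μ_opt = 1 - 2√(aη),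
λ(μ) = -((1-μ) - √((1-μ)² - 4aη))/η satisfies λ(μ) = -2a/(1-μ) + O(a²η/(1-μ)³),
and λ(μ) ≤ λ(0) for all μ ∈ [0, μ_opt]: any nonzero momentum improves the descent rate. -/
theorem stmt_11 (a η : ℝ) (ha : 0 < a) (hη : 0 < η) (haη : 4 * a * η < 1)
    (lam : ℝ → ℝ)
    (hlam : ∀ μ : ℝ, lam μ =
      -((1 - μ) - Real.sqrt ((1 - μ) ^ 2 - 4 * a * η)) / η)
    (μopt : ℝ) (hμopt : μopt = 1 - 2 * Real.sqrt (a * η)) :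
    (∃ C > (0 : ℝ), ∀ μ ∈ Set.Icc (0 : ℝ) μopt,
      |lam μ - (-(2 * a) / (1 - μ))| ≤ C * (a ^ 2 * η / (1 - μ) ^ 3)) ∧
    (∀ μ ∈ Set.Icc (0 : ℝ) μopt, lam μ ≤ lam 0) :=
  stmt_11_general a η ha hη lam hlam μopt hμopt
end

section
/- Let a, η, Σ > 0 and define Φ(m, μ) = Re λ(μ) · (m - ηΣ/(4(1-μ))) for μ ∈ [0,1), where λ(μ) = -((1-μ) - √((1-μ)²-4aη))/η. For μ ∈ (μ_opt, 1) with μ_opt = max(1-2√(aη),0), the map μ ↦ Φ(m,μ) is increasing; hence argmin_{μ∈[0,1)} Φ(m,μ) ≤ μ_opt. Moreover, if μ > 1 - ηΣ/(4m) and μ ≤ μ_opt then Φ(m,μ) > 0 and Φ is increasing there, so the minimizer satisfies μ* ≤ 1 - ηΣ/(4m). -/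
/-!
Write `c = 1 - μ`, so that `Re λ(μ) = (-c + √(c² - 4aη)) / η` (the real square root vanishing
on negative arguments). For `μ > μ_opt` the discriminant `c² - 4aη` is negative, hence
`Φ(μ) = S/4 - c·m/η`, which is affine and increasing in `μ`; a minimizer over `[0, 1)` therefore
cannot lie beyond `μ_opt`. On `[0, μ_opt]` we always have `Re λ < 0` because `√(c² - 4aη) < c`,
so `Φ > 0` exactly when `m < ηS/(4c)`, i.e. when `μ > 1 - ηS/(4m)`. Since `Φ` vanishes at
`μ = 1 - ηS/(4m)`, a minimizer cannot sit in that region either.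
-/

open Complex

lemma re_ofReal_cpow_one_div_two (x : ℝ) : ((x : ℂ) ^ (1 / 2 : ℂ)).re = √x := by
  rw [one_div, cpow_inv_two_re, norm_real, Real.norm_eq_abs, ofReal_re]
  rcases le_total 0 x with hx | hx
  · rw [abs_of_nonneg hx, add_self_div_two]
  · rw [abs_of_nonpos hx, neg_add_cancel, zero_div, Real.sqrt_zero, Real.sqrt_eq_zero'.mpr hx]

lemma re_neg_sub_cpow_one_div_two_div (c d η : ℝ) :
    (-((c : ℂ) - ((c ^ 2 - d : ℝ) : ℂ) ^ (1 / 2 : ℂ)) / (η : ℂ)).re = (-c + √(c ^ 2 - d)) / η := by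
  rw [div_ofReal_re, neg_re, sub_re, ofReal_re, re_ofReal_cpow_one_div_two]
  ring

lemma neg_add_sqrt_sq_sub_div_neg {c d η : ℝ} (hc : 0 < c) (hd : 0 < d) (hη : 0 < η) :
    (-c + √(c ^ 2 - d)) / η < 0 := by
  have hsqrt : √(c ^ 2 - d) < c := (Real.sqrt_lt' hc).mpr (by linarith)
  exact div_neg_of_neg_of_pos (by linarith) hη

lemma neg_add_sqrt_sq_sub_div_of_sq_lt {c d η : ℝ} (h : c ^ 2 < d) :
    (-c + √(c ^ 2 - d)) / η = -c / η := by
  rw [Real.sqrt_eq_zero'.mpr (by linarith), add_zero]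

lemma sq_one_sub_lt_of_one_sub_two_sqrt_lt {a μ : ℝ} (ha : 0 ≤ a) (hlow : 1 - 2 * √a < μ)
    (hμ : μ < 1) : (1 - μ) ^ 2 < 4 * a := by
  have hsq : (2 * √a) ^ 2 = 4 * a := by rw [mul_pow, Real.sq_sqrt ha]; norm_num
  rw [← hsq]
  exact pow_lt_pow_left₀ (by linarith) (by linarith) two_ne_zero

lemma max_one_sub_two_mul_sqrt_lt_one {x : ℝ} (hx : 0 < x) : max (1 - 2 * √x) 0 < 1 :=
  max_lt (by linarith [Real.sqrt_pos.mpr hx]) one_pos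

lemma sub_div_four_mul_one_sub_neg {K m μ : ℝ} (hm : 0 < m) (hlow : 1 - K / (4 * m) < μ)
    (hμ : μ < 1) : m - K / (4 * (1 - μ)) < 0 := by
  have hgap : (1 - μ) * (4 * m) < K := (lt_div_iff₀ (mul_pos four_pos hm)).mp (by linarith)
  rw [sub_neg, lt_div_iff₀ (by linarith)]
  linarith

lemma sub_div_four_mul_one_sub_eq_zero {K m : ℝ} (hK : K ≠ 0) :
    m - K / (4 * (1 - (1 - K / (4 * m)))) = 0 := by
  rw [sub_sub_cancel]
  field_simp
  ring

lemma IsMinOn.le_of_strictMonoOn_Ioo {α β : Type*} [LinearOrder α] [DenselyOrdered α]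
    [Preorder β] {f : α → β} {s : Set α} {p b x : α} (hf : StrictMonoOn f (Set.Ioo p b))
    (hs : Set.Ioo p b ⊆ s) (hmin : IsMinOn f s x) (hxb : x < b) : x ≤ p := by
  by_contra! hpx
  obtain ⟨y, hpy, hyx⟩ := exists_between hpx
  have hy : y ∈ Set.Ioo p b := ⟨hpy, hyx.trans hxb⟩
  exact (hf hy ⟨hpx, hxb⟩ hyx).not_ge (hmin (hs hy))

/-- HJB minimization for the momentum-parameter control problem. With
Φ(m,μ) = Re λ(μ)·(m - ηΣ/(4(1-μ))): Φ(m,·) is strictly increasing on (μ_opt, 1),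
so any minimizer over [0,1) is ≤ μ_opt; moreover Φ(m,μ) > 0 for
1 - ηΣ/(4m) < μ ≤ μ_opt (μ ≥ 0), and any minimizer is ≤ 1 - ηΣ/(4m). -/
theorem stmt_12 (a η S m : ℝ) (ha : 0 < a) (hη : 0 < η) (hS : 0 < S) (hm : 0 < m)
    (lam : ℝ → ℂ)
    (hlam : ∀ μ : ℝ, lam μ =
      -(((1 - μ : ℝ) : ℂ) - (((1 - μ) ^ 2 - 4 * a * η : ℝ) : ℂ) ^ (1 / 2 : ℂ)) / (η : ℂ))
    (Φ : ℝ → ℝ)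
    (hΦ : ∀ μ : ℝ, Φ μ = (lam μ).re * (m - η * S / (4 * (1 - μ))))
    (μopt : ℝ) (hμopt : μopt = max (1 - 2 * Real.sqrt (a * η)) 0) :
    StrictMonoOn Φ (Set.Ioo μopt 1) ∧
    (∀ μstar ∈ Set.Ico (0 : ℝ) 1, IsMinOn Φ (Set.Ico (0 : ℝ) 1) μstar → μstar ≤ μopt) ∧
    (∀ μ, 0 ≤ μ → 1 - η * S / (4 * m) < μ → μ ≤ μopt → 0 < Φ μ) ∧
    (η * S / (4 * m) ≤ 1 →
      ∀ μstar ∈ Set.Ico (0 : ℝ) 1, IsMinOn Φ (Set.Ico (0 : ℝ) 1) μstar →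
        μstar ≤ 1 - η * S / (4 * m)) := by
  have hre : ∀ μ, (lam μ).re = (-(1 - μ) + √((1 - μ) ^ 2 - 4 * a * η)) / η := fun μ => by
    rw [hlam, re_neg_sub_cpow_one_div_two_div]
  have hopt_nonneg : 0 ≤ μopt := hμopt ▸ le_max_right _ _
  have hopt_lt_one : μopt < 1 := hμopt ▸ max_one_sub_two_mul_sqrt_lt_one (mul_pos ha hη)
  have hΦ_affine : Set.EqOn (fun μ => S / 4 - (1 - μ) * m / η) Φ (Set.Ioo μopt 1) := by
    intro μ ⟨hlow, hμ⟩
    have hdisc : (1 - μ) ^ 2 < 4 * a * η := by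
      rw [mul_assoc]
      exact sq_one_sub_lt_of_one_sub_two_sqrt_lt (by positivity)
        ((hμopt ▸ le_max_left _ _).trans_lt hlow) hμ
    rw [hΦ, hre, neg_add_sqrt_sq_sub_div_of_sq_lt hdisc]
    field_simp [(sub_pos.mpr hμ).ne']
    ring
  have hmono : StrictMonoOn Φ (Set.Ioo μopt 1) := by
    refine StrictMonoOn.congr (fun x _ y _ hxy => ?_) hΦ_affine
    gcongr
  have hle_opt : ∀ μstar ∈ Set.Ico (0 : ℝ) 1, IsMinOn Φ (Set.Ico (0 : ℝ) 1) μstar →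
      μstar ≤ μopt := fun μstar hμstar hmin =>
    hmin.le_of_strictMonoOn_Ioo hmono (Set.Ioo_subset_Ico_self.trans
      (Set.Ico_subset_Ico_left hopt_nonneg)) hμstar.2
  have hpos : ∀ μ, 0 ≤ μ → 1 - η * S / (4 * m) < μ → μ ≤ μopt → 0 < Φ μ := by
    intro μ _ hlow hle
    have hμ : μ < 1 := hle.trans_lt hopt_lt_one
    rw [hΦ, hre]
    exact mul_pos_of_neg_of_neg (neg_add_sqrt_sq_sub_div_neg (sub_pos.mpr hμ) (by positivity) hη)
      (sub_div_four_mul_one_sub_neg hm hlow hμ)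
  refine ⟨hmono, hle_opt, hpos, fun hthr μstar hμstar hmin => ?_⟩
  by_contra! hlt
  have hzero : Φ (1 - η * S / (4 * m)) = 0 := by
    rw [hΦ, sub_div_four_mul_one_sub_eq_zero (by positivity), mul_zero]
  have hmem : 1 - η * S / (4 * m) ∈ Set.Ico (0 : ℝ) 1 :=
    ⟨by linarith, by linarith [show 0 < η * S / (4 * m) by positivity]⟩
  linarith [isMinOn_iff.mp hmin _ hmem, hpos μstar hμstar.1 hlt (hle_opt μstar hμstar hmin)]
end

section
/- Let a, η > 0 with aη < 1/4 and set μ_opt = 1 - 2√(aη). For μ ∈ [0,1) let λ(μ) = -((1-μ) - √((1-μ)² - 4aη))/η, with the principal square root. Then λ(μ_opt) = -(1-μ_opt)/η = -2√(aη)/η = -2√(a/η), and for every μ ∈ [0,1), Re λ(μ) ≥ -2√(a/η). -/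
open Complex

lemma real_half_pow (x : ℝ) (hx : 0 ≤ x) : ((x:ℂ)) ^ (1/2 : ℂ) = (Real.sqrt x : ℂ) := by
  rw [show (1/2 : ℂ) = ((1/2 : ℝ) : ℂ) by norm_num, ← Complex.ofReal_cpow hx,
    ← Real.sqrt_eq_rpow]

lemma neg_half_pow_re (x : ℝ) (hx : x < 0) : (((x:ℂ)) ^ (1/2 : ℂ)).re = 0 := by
  rw [Complex.ofReal_cpow_of_nonpos hx.le, show ((-(x:ℂ))) = ((-x : ℝ):ℂ) by push_cast; ring,
    real_half_pow _ (by linarith)]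
  have : Complex.exp (↑Real.pi * I * (1/2)) = I := by
    rw [show (↑Real.pi * I * (1/2 : ℂ)) = ((Real.pi/2 : ℝ) : ℂ) * I by push_cast; ring,
      Complex.exp_mul_I]
    simp
  rw [this]
  simp

/-- The best achievable dominant decay rate of momentum SGD moment dynamics:
λ(μ_opt) = -2√(a/η) at μ_opt = 1 - 2√(aη), and Re λ(μ) ≥ -2√(a/η) for all μ ∈ [0,1),
where λ(μ) = -((1-μ) - √((1-μ)² - 4aη))/η with the principal complex square root. -/
theorem stmt_19 (a η : ℝ) (ha : 0 < a) (hη : 0 < η) (haη : a * η < 1 / 4)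
    (lam : ℝ → ℂ)
    (hlam : ∀ μ : ℝ, lam μ =
      -(((1 - μ : ℝ) : ℂ) - (((1 - μ) ^ 2 - 4 * a * η : ℝ) : ℂ) ^ (1 / 2 : ℂ)) / (η : ℂ))
    (μopt : ℝ) (hμopt : μopt = 1 - 2 * Real.sqrt (a * η)) :
    lam μopt = (-(2 * Real.sqrt (a / η)) : ℝ) ∧
    ∀ μ ∈ Set.Ico (0 : ℝ) 1, -(2 * Real.sqrt (a / η)) ≤ (lam μ).re := by
  have haη0 : 0 < a * η := mul_pos ha hη
  have hs : Real.sqrt (a * η) > 0 := Real.sqrt_pos.mpr haη0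
  have hsq : Real.sqrt (a * η) ^ 2 = a * η := Real.sq_sqrt haη0.le
  have hrep : Real.sqrt (a / η) = Real.sqrt (a * η) / η := by
    have h2 : (Real.sqrt (a*η)/η)^2 = a/η := by
      rw [div_pow, hsq]; field_simp
    rw [← h2, Real.sqrt_sq (by positivity)]
  constructor
  · have h1 : (1 - μopt) ^ 2 - 4 * a * η = 0 := by
      rw [hμopt]; nlinarith [hsq]
    rw [hlam, h1, show ((0:ℝ):ℂ) = 0 by norm_num, Complex.zero_cpow (by norm_num), hμopt]
    have : (-(2 * Real.sqrt (a/η)) : ℝ) = (-(2*Real.sqrt (a*η))) / η := by rw [hrep]; ring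
    rw [this]; push_cast; ring
  · intro μ hμ
    set D : ℝ := (1 - μ) ^ 2 - 4 * a * η with hD
    have hμ1 : 0 < 1 - μ := by linarith [hμ.2]
    rcases le_or_gt 0 D with hD0 | hD0
    · rw [hlam, show ((D:ℝ):ℂ) ^ (1/2:ℂ) = (Real.sqrt D : ℂ) from real_half_pow D hD0]
      have hre : ((-(((1 - μ : ℝ) : ℂ) - (Real.sqrt D : ℂ)) / (η : ℂ))) = (((-(1-μ) + Real.sqrt D)/η : ℝ) : ℂ) := by
        push_cast; ring
      rw [hre, Complex.ofReal_re, hrep,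
        show -(2*(Real.sqrt (a*η)/η)) = (-(2*Real.sqrt (a*η)))/η by ring]
      have hsD : 1 - μ - 2*Real.sqrt (a*η) ≤ Real.sqrt D := by
        rcases le_or_gt (1 - μ - 2*Real.sqrt (a*η)) 0 with h | h
        · exact h.trans (Real.sqrt_nonneg D)
        · rw [Real.le_sqrt h.le (by exact hD0)]
          nlinarith [hsq]
      rw [div_le_div_iff₀ hη hη]
      nlinarith [hsD]
    · rw [hlam, Complex.div_ofReal_re]
      have hz := neg_half_pow_re D hD0
      rw [Complex.neg_re, Complex.sub_re, Complex.ofReal_re, hz, hrep]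
      have ht : 1 - μ ≤ 2 * Real.sqrt (a*η) := by nlinarith [hsq]
      rw [show -(2*(Real.sqrt (a*η)/η)) = (-(2*Real.sqrt (a*η)))/η by ring,
        show (-((1-μ) - 0) : ℝ) = -(1-μ) by ring, div_le_div_iff₀ hη hη]
      nlinarith
end
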